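/- arXiv:2311.05033 — 2 statements merged into one kernel-verified Lean document; each statement's English description precedes it below -/
import Mathlib

section
/- Let Z_1, ..., Z_n be i.i.d. random variables taking values in {-1, 1} with mean a ≠ 0 and variance σ² = 1 - a². Then there exists a finite constant c* depending only on a such that E|(1/n)∑_{i=1}^n Z_i| ≤ |a| + (c*/n^{3/2}) σⁿ. -/
open MeasureTheory ProbabilityTheory

set_option linter.unusedSectionVars false
set_option maxHeartbeats 1000000

open Real

section Aux

variable {Ω : Type*} [MeasureSpace Ω] [IsProbabilityMeasure (ℙ : Measure Ω)]



lemma indep_integral_mul_complex {X Y : Ω → ℂ} (h : IndepFun X Y ℙ)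
    (hX : Integrable X ℙ) (hY : Integrable Y ℙ) :
    ∫ ω, X ω * Y ω = (∫ ω, X ω) * ∫ ω, Y ω := by
  have hXY : Integrable (fun ω => X ω * Y ω) ℙ := h.integrable_mul hX hY
  have hrr : IndepFun (fun ω => (X ω).re) (fun ω => (Y ω).re) ℙ :=
    h.comp Complex.measurable_re Complex.measurable_re
  have hri : IndepFun (fun ω => (X ω).re) (fun ω => (Y ω).im) ℙ :=
    h.comp Complex.measurable_re Complex.measurable_im
  have hir : IndepFun (fun ω => (X ω).im) (fun ω => (Y ω).re) ℙ :=
    h.comp Complex.measurable_im Complex.measurable_re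
  have hii : IndepFun (fun ω => (X ω).im) (fun ω => (Y ω).im) ℙ :=
    h.comp Complex.measurable_im Complex.measurable_im
  have hXr : Integrable (fun ω => (X ω).re) ℙ := hX.re
  have hXi : Integrable (fun ω => (X ω).im) ℙ := hX.im
  have hYr : Integrable (fun ω => (Y ω).re) ℙ := hY.re
  have hYi : Integrable (fun ω => (Y ω).im) ℙ := hY.im
  have h1 : ∫ ω, (X ω).re * (Y ω).re = (∫ ω, (X ω).re) * ∫ ω, (Y ω).re :=
    hrr.integral_fun_mul_eq_mul_integral hXr.aestronglyMeasurable hYr.aestronglyMeasurable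
  have h2 : ∫ ω, (X ω).im * (Y ω).im = (∫ ω, (X ω).im) * ∫ ω, (Y ω).im :=
    hii.integral_fun_mul_eq_mul_integral hXi.aestronglyMeasurable hYi.aestronglyMeasurable
  have h3 : ∫ ω, (X ω).re * (Y ω).im = (∫ ω, (X ω).re) * ∫ ω, (Y ω).im :=
    hri.integral_fun_mul_eq_mul_integral hXr.aestronglyMeasurable hYi.aestronglyMeasurable
  have h4 : ∫ ω, (X ω).im * (Y ω).re = (∫ ω, (X ω).im) * ∫ ω, (Y ω).re :=
    hir.integral_fun_mul_eq_mul_integral hXi.aestronglyMeasurable hYr.aestronglyMeasurable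
  have i1 : Integrable (fun ω => (X ω).re * (Y ω).re) ℙ := hrr.integrable_mul hXr hYr
  have i2 : Integrable (fun ω => (X ω).im * (Y ω).im) ℙ := hii.integrable_mul hXi hYi
  have i3 : Integrable (fun ω => (X ω).re * (Y ω).im) ℙ := hri.integrable_mul hXr hYi
  have i4 : Integrable (fun ω => (X ω).im * (Y ω).re) ℙ := hir.integrable_mul hXi hYr
  have jXr : ∫ ω, (X ω).re = (∫ ω, X ω).re := by
    simpa [RCLike.re_to_complex] using integral_re (𝕜 := ℂ) hX
  have jXi : ∫ ω, (X ω).im = (∫ ω, X ω).im := by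
    simpa [RCLike.im_to_complex] using integral_im (𝕜 := ℂ) hX
  have jYr : ∫ ω, (Y ω).re = (∫ ω, Y ω).re := by
    simpa [RCLike.re_to_complex] using integral_re (𝕜 := ℂ) hY
  have jYi : ∫ ω, (Y ω).im = (∫ ω, Y ω).im := by
    simpa [RCLike.im_to_complex] using integral_im (𝕜 := ℂ) hY
  have jr : ∫ ω, (X ω * Y ω).re = (∫ ω, X ω * Y ω).re := by
    simpa [RCLike.re_to_complex] using integral_re (𝕜 := ℂ) hXY
  have ji : ∫ ω, (X ω * Y ω).im = (∫ ω, X ω * Y ω).im := by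
    simpa [RCLike.im_to_complex] using integral_im (𝕜 := ℂ) hXY
  apply Complex.ext
  · rw [← jr]
    simp only [Complex.mul_re]
    rw [integral_sub i1 i2, h1, h2, jXr, jXi, jYr, jYi]
  · rw [← ji]
    simp only [Complex.mul_im]
    rw [integral_add i3 i4, h3, h4, jXr, jXi, jYr, jYi]



lemma indep_integrable_prod {n : ℕ} {W : Fin n → Ω → ℂ}
    (hm : ∀ i, Measurable (W i)) {C : ℝ}
    (hb : ∀ i, ∀ᵐ ω ∂ℙ, ‖W i ω‖ ≤ C) (s : Finset (Fin n)) :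
    Integrable (fun ω => ∏ i ∈ s, W i ω) ℙ := by
  refine Integrable.mono' (integrable_const (C ^ s.card)) ?_ ?_
  · exact (Finset.measurable_prod s fun i _ => hm i).aestronglyMeasurable
  · have hall : ∀ᵐ ω ∂ℙ, ∀ i, ‖W i ω‖ ≤ C := ae_all_iff.2 hb
    filter_upwards [hall] with ω hω
    calc ‖∏ i ∈ s, W i ω‖ ≤ ∏ i ∈ s, ‖W i ω‖ := Finset.norm_prod_le s fun i => W i ω
      _ ≤ ∏ _i ∈ s, C := Finset.prod_le_prod (fun i _ => norm_nonneg _) fun i _ => hω i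
      _ = C ^ s.card := Finset.prod_const C

lemma indep_integral_prod {n : ℕ} {W : Fin n → Ω → ℂ}
    (hind : iIndepFun W ℙ) (hm : ∀ i, Measurable (W i)) {C : ℝ}
    (hb : ∀ i, ∀ᵐ ω ∂ℙ, ‖W i ω‖ ≤ C) :
    ∫ ω, ∏ i, W i ω = ∏ i, ∫ ω, W i ω := by
  have key : ∀ s : Finset (Fin n), ∫ ω, ∏ i ∈ s, W i ω = ∏ i ∈ s, ∫ ω, W i ω := by
    intro s
    induction s using Finset.induction_on with
    | empty => simp
    | @insert j s hj ih =>
      have hfun : (fun ω => ∏ i ∈ s, W i ω) = ∏ i ∈ s, W i := by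
        ext ω; simp [Finset.prod_apply]
      have hIF : IndepFun (W j) (fun ω => ∏ i ∈ s, W i ω) ℙ := by
        rw [hfun]; exact (hind.indepFun_finset_prod_of_notMem hm hj).symm
      have hint : Integrable (fun ω => ∏ i ∈ s, W i ω) ℙ := indep_integrable_prod hm hb s
      have hWj : Integrable (W j) ℙ :=
        Integrable.mono' (integrable_const C) (hm j).aestronglyMeasurable (hb j)
      have hmul := indep_integral_mul_complex hIF hWj hint
      rw [Finset.prod_insert hj]
      simp_rw [Finset.prod_insert hj]
      rw [hmul, ih]
  exact key Finset.univ


lemma my_cos_le_exp {u : ℝ} (h0 : 0 ≤ u) (h1 : u ≤ π/2) :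
    Real.cos u ≤ Real.exp (-(u^2/4)) := by
  rcases eq_or_lt_of_le h0 with h | h
  · simp [← h]
  · have hv0 : 0 < u/2 := by linarith
    have hv1 : u/2 ≤ 1 := by nlinarith [pi_le_four]
    have hsin := Real.sin_gt_sub_cube hv0
    have hcube : (u/2)^3 ≤ u/2 := by
      nlinarith [mul_nonneg (mul_nonneg hv0.le (by linarith : (0:ℝ) ≤ 1 - u/2))
        (by linarith : (0:ℝ) ≤ 1 + u/2)]
    have hsin' : (3/4) * (u/2) ≤ Real.sin (u/2) := by nlinarith
    have hcos : Real.cos u = 1 - 2 * Real.sin (u/2) ^ 2 := by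
      have := Real.cos_two_mul' (u/2)
      have h2 : 2 * (u/2) = u := by ring
      rw [h2] at this
      rw [this, Real.cos_sq']
      ring
    have hsq : (9/16) * (u/2)^2 ≤ Real.sin (u/2) ^ 2 := by nlinarith
    have hstep : Real.cos u ≤ 1 - u^2/4 := by rw [hcos]; nlinarith
    have := Real.add_one_le_exp (-(u^2/4))
    linarith

lemma my_cos_le_exp' {θ : ℝ} (h : |θ| ≤ π/2) : Real.cos θ ≤ Real.exp (-(θ^2/4)) := by
  have := my_cos_le_exp (abs_nonneg θ) h
  rwa [Real.cos_abs, sq_abs] at this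

lemma my_cos_pow_integral (n : ℕ) (hn : 0 < n) :
    ∫ θ in (-(π/2))..(π/2), Real.cos θ ^ n ≤ 2 * Real.sqrt π / Real.sqrt n := by
  have hle : -(π/2) ≤ π/2 := by linarith [pi_pos]
  have hb : (0:ℝ) < (n:ℝ)/4 := by positivity
  have hmono : ∫ θ in (-(π/2))..(π/2), Real.cos θ ^ n
      ≤ ∫ θ in (-(π/2))..(π/2), Real.exp (-((n:ℝ)/4) * θ^2) := by
    apply intervalIntegral.integral_mono_on hle
    · exact ((Real.continuous_cos.pow n).intervalIntegrable _ _)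
    · exact ((Real.continuous_exp.comp (by continuity)).intervalIntegrable _ _)
    · intro θ hθ
      have habs : |θ| ≤ π/2 := by
        rw [abs_le]; exact ⟨hθ.1, hθ.2⟩
      have h1 : Real.cos θ ^ n ≤ Real.exp (-(θ^2/4)) ^ n := by
        apply pow_le_pow_left₀ (Real.cos_nonneg_of_mem_Icc ⟨by linarith [habs, abs_le.mp habs], by linarith [(abs_le.mp habs).2]⟩) (my_cos_le_exp' habs)
      calc Real.cos θ ^ n ≤ Real.exp (-(θ^2/4)) ^ n := h1
        _ = Real.exp (-((n:ℝ)/4) * θ^2) := by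
          rw [← Real.exp_nat_mul]; ring_nf
  have hgauss : ∫ θ in (-(π/2))..(π/2), Real.exp (-((n:ℝ)/4) * θ^2)
      ≤ ∫ θ : ℝ, Real.exp (-((n:ℝ)/4) * θ^2) := by
    rw [intervalIntegral.integral_of_le hle]
    apply setIntegral_le_integral (integrable_exp_neg_mul_sq hb)
    filter_upwards with θ using le_of_lt (Real.exp_pos _)
  have hval : ∫ θ : ℝ, Real.exp (-((n:ℝ)/4) * θ^2) = Real.sqrt (π / ((n:ℝ)/4)) :=
    integral_gaussian _
  have hsimp : Real.sqrt (π / ((n:ℝ)/4)) = 2 * Real.sqrt π / Real.sqrt n := by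
    rw [show π / ((n:ℝ)/4) = (4*π)/(n:ℝ) by ring]
    rw [Real.sqrt_div (by positivity) _]
    rw [show (4:ℝ)*π = 2^2*π by norm_num, Real.sqrt_mul (by positivity), Real.sqrt_sq (by norm_num)]
  refine hmono.trans (hgauss.trans ?_)
  rw [hval, hsimp]


lemma my_exp_orth (d : ℤ) :
    ∫ θ in (-(π/2))..(π/2), Complex.exp ((2*d*Complex.I) * θ)
      = if d = 0 then (π:ℂ) else 0 := by
  rcases eq_or_ne d 0 with rfl | hd
  · simp only [Int.cast_zero, mul_zero, zero_mul, Complex.exp_zero, if_pos]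
    rw [intervalIntegral.integral_const]
    rw [show (π/2 : ℝ) - (-(π/2)) = π by ring]
    simp
  · have hc : (2*(d:ℂ)*Complex.I) ≠ 0 := by
      simp [Complex.I_ne_zero]
      exact_mod_cast hd
    rw [integral_exp_mul_complex hc]
    have e1 : (2*(d:ℂ)*Complex.I) * ((π/2:ℝ):ℂ) = (d:ℂ) * (π * Complex.I) := by
      push_cast; ring
    have e2 : (2*(d:ℂ)*Complex.I) * ((-(π/2):ℝ):ℂ) = ((-d : ℤ):ℂ) * (π * Complex.I) := by
      push_cast; ring
    rw [e1, e2, Complex.exp_int_mul, Complex.exp_int_mul, Complex.exp_pi_mul_I]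
    have : ((-1:ℂ)) ^ (-d) = ((-1:ℂ)) ^ d := by
      rcases Int.even_or_odd d with he | ho
      · rw [he.neg_one_zpow, (he.neg).neg_one_zpow]
      · rw [ho.neg_one_zpow, (ho.neg).neg_one_zpow]
    rw [this, sub_self, zero_div]
    simp [hd]

lemma my_tail_sum {ρ : ℝ} (h0 : 0 ≤ ρ) (h1 : ρ < 1) (n : ℕ) :
    ∑ k ∈ Finset.range (n+1), ((2*k - n : ℕ) : ℝ) * ρ ^ (2*k - n : ℕ) ≤ ρ/(1-ρ)^2 := by
  have hhs : HasSum (fun m : ℕ => (m:ℝ) * ρ ^ m) (ρ/(1-ρ)^2) := by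
    apply hasSum_coe_mul_geometric_of_norm_lt_one
    rw [Real.norm_eq_abs, abs_of_nonneg h0]; exact h1
  set T := (Finset.range (n+1)).filter (fun k => n < 2*k) with hT
  have h2 : ∑ k ∈ Finset.range (n+1), ((2*k - n : ℕ) : ℝ) * ρ ^ (2*k - n : ℕ)
      = ∑ k ∈ T, ((2*k - n : ℕ) : ℝ) * ρ ^ (2*k - n : ℕ) := by
    symm
    apply Finset.sum_subset (Finset.filter_subset _ _)
    intro k hk hk2
    have : ¬ n < 2*k := by
      intro hh
      exact hk2 (Finset.mem_filter.mpr ⟨hk, hh⟩)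
    have : 2*k - n = 0 := by omega
    simp [this]
  have hinj : ∀ x ∈ T, ∀ y ∈ T, 2*x - n = 2*y - n → x = y := by
    intro x hx y hy hxy
    rw [hT, Finset.mem_filter] at hx hy
    omega
  have h3 : ∑ m ∈ T.image (fun k => 2*k - n), (m:ℝ) * ρ ^ m
      = ∑ k ∈ T, ((2*k - n : ℕ) : ℝ) * ρ ^ (2*k - n : ℕ) := by
    rw [Finset.sum_image hinj]
  rw [h2, ← h3]
  exact Summable.sum_le_tsum _ (fun m _ => by positivity) hhs.summable |>.trans_eq hhs.tsum_eq


lemma my_integral_sum_indicator {F : Ω → ℂ} {s : Finset ℕ} {A : ℕ → Set Ω}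
    (hA : ∀ k ∈ s, MeasurableSet (A k)) (c : ℕ → ℂ)
    (h : F =ᵐ[ℙ] fun ω => ∑ k ∈ s, (A k).indicator (fun _ => c k) ω) :
    ∫ ω, F ω = ∑ k ∈ s, ((ℙ (A k)).toReal : ℂ) * c k := by
  rw [integral_congr_ae h,
    integral_finset_sum s (fun k hk => (integrable_const (c k)).indicator (hA k hk))]
  refine Finset.sum_congr rfl fun k hk => ?_
  rw [integral_indicator_const (c k) (hA k hk)]
  simp [Complex.real_smul, measureReal_def]

lemma my_integral_sum_indicator_real {F : Ω → ℝ} {s : Finset ℕ} {A : ℕ → Set Ω}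
    (hA : ∀ k ∈ s, MeasurableSet (A k)) (c : ℕ → ℝ)
    (h : F =ᵐ[ℙ] fun ω => ∑ k ∈ s, (A k).indicator (fun _ => c k) ω) :
    ∫ ω, F ω = ∑ k ∈ s, (ℙ (A k)).toReal * c k := by
  rw [integral_congr_ae h,
    integral_finset_sum s (fun k hk => (integrable_const (c k)).indicator (hA k hk))]
  refine Finset.sum_congr rfl fun k hk => ?_
  rw [integral_indicator_const (c k) (hA k hk)]
  simp [measureReal_def]

theorem key_lemma (a σ : ℝ) (ha0 : 0 < a) (ha1 : a < 1) (hσ : 0 ≤ σ)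
    (hσ2 : σ ^ 2 = 1 - a ^ 2) (n : ℕ) (hn : 0 < n) (Z : Fin n → Ω → ℝ)
    (hmeas : ∀ i, Measurable (Z i))
    (hindep : iIndepFun Z ℙ)
    (hpm : ∀ i, ∀ᵐ ω ∂ℙ, Z i ω = 1 ∨ Z i ω = -1)
    (hmean : ∀ i, ℙ[Z i] = a) :
    ℙ[fun ω => |(1 / (n : ℝ)) * ∑ i, Z i ω|]
      ≤ a + (4 * Real.sqrt ((1-a)/(1+a)) / ((1 - Real.sqrt ((1-a)/(1+a)))^2 * Real.sqrt π))
          / (n : ℝ) ^ (3 / 2 : ℝ) * σ ^ n := by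
  classical
  -- basic parameters
  set p : ℝ := (1+a)/2 with hp_def
  set q : ℝ := (1-a)/2 with hq_def
  have hp : 0 < p := by rw [hp_def]; linarith
  have hq : 0 < q := by rw [hq_def]; linarith
  have hqp : q / p < 1 := by rw [div_lt_one hp]; rw [hp_def, hq_def]; linarith
  have hρeq : Real.sqrt ((1-a)/(1+a)) = Real.sqrt (q/p) := by
    congr 1; rw [hp_def, hq_def]; field_simp
  rw [hρeq]
  set ρ : ℝ := Real.sqrt (q/p) with hρ_def
  have hρ0 : 0 < ρ := Real.sqrt_pos.2 (by positivity)
  have hρ1 : ρ < 1 := by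
    have := Real.sqrt_lt_sqrt (by positivity : (0:ℝ) ≤ q/p) hqp
    simpa using this
  set spq : ℝ := Real.sqrt (p*q) with hspq_def
  have hspq : 0 < spq := Real.sqrt_pos.2 (by positivity)
  have hσval : σ = 2 * spq := by
    have h4 : σ^2 = (2*spq)^2 := by
      rw [hσ2, mul_pow, hspq_def, Real.sq_sqrt (by positivity : (0:ℝ) ≤ p*q), hp_def, hq_def]
      ring
    calc σ = Real.sqrt (σ^2) := (Real.sqrt_sq hσ).symm
      _ = Real.sqrt ((2*spq)^2) := by rw [h4]
      _ = 2*spq := Real.sqrt_sq (by positivity)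
  have hpρ : p * ρ = spq := by
    rw [hρ_def, hspq_def]
    calc p * Real.sqrt (q/p) = Real.sqrt (p^2) * Real.sqrt (q/p) := by
          rw [Real.sqrt_sq hp.le]
      _ = Real.sqrt (p^2 * (q/p)) := (Real.sqrt_mul (by positivity) _).symm
      _ = Real.sqrt (p*q) := by congr 1; field_simp
  have hqρ : q * ρ⁻¹ = spq := by
    rw [hρ_def, hspq_def, ← Real.sqrt_inv]
    calc q * Real.sqrt ((q/p)⁻¹) = Real.sqrt (q^2) * Real.sqrt ((q/p)⁻¹) := by
          rw [Real.sqrt_sq hq.le]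
      _ = Real.sqrt (q^2 * (q/p)⁻¹) := (Real.sqrt_mul (by positivity) _).symm
      _ = Real.sqrt (p*q) := by congr 1; field_simp
  -- random variables
  set S : Ω → ℝ := fun ω => ∑ i, Z i ω with hS_def
  have hSmeas : Measurable S := Finset.measurable_sum _ (fun i _ => hmeas i)
  have habs : ∀ i, ∀ᵐ ω ∂ℙ, |Z i ω| ≤ 1 := fun i =>
    (hpm i).mono (fun ω h => by rcases h with h|h <;> simp [h])
  have hZint : ∀ i, Integrable (Z i) ℙ := fun i =>
    Integrable.mono' (integrable_const 1) (hmeas i).aestronglyMeasurable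
      ((habs i).mono fun ω h => by simpa using h)
  have hSint : Integrable S ℙ := integrable_finset_sum _ (fun i _ => hZint i)
  have hES : ∫ ω, S ω = n * a := by
    rw [hS_def]
    rw [integral_finset_sum _ (fun i _ => hZint i)]
    simp only [hmean]
    rw [Finset.sum_const, Finset.card_univ, Fintype.card_fin]
    simp
  have hG : ∀ᵐ ω ∂ℙ, ∀ i, Z i ω = 1 ∨ Z i ω = -1 := ae_all_iff.2 hpm
  set κ : Ω → ℕ := fun ω => (Finset.univ.filter (fun i => Z i ω = -1)).card with hκ_def
  have hκn : ∀ ω, κ ω ≤ n := fun ω =>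
    le_trans (Finset.card_filter_le _ _) (by simp)
  have hSval : ∀ ω, (∀ i, Z i ω = 1 ∨ Z i ω = -1) → S ω = (n:ℝ) - 2 * κ ω := by
    intro ω hω
    have hsplit := Finset.sum_filter_add_sum_filter_not Finset.univ
      (fun i => Z i ω = -1) (fun i => Z i ω)
    have hcard := Finset.card_filter_add_card_filter_not
      (s := Finset.univ) (p := fun i : Fin n => Z i ω = -1)
    have h1 : ∑ i ∈ Finset.univ.filter (fun i => Z i ω = -1), Z i ω = -(κ ω : ℝ) := by
      rw [Finset.sum_congr rfl (fun i hi => (Finset.mem_filter.mp hi).2), Finset.sum_const]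
      rw [hκ_def]; simp
    have h2 : ∑ i ∈ Finset.univ.filter (fun i => ¬(Z i ω = -1)), Z i ω
        = ((n - κ ω : ℕ) : ℝ) := by
      have hval : ∀ i ∈ Finset.univ.filter (fun i => ¬(Z i ω = -1)), Z i ω = 1 := by
        intro i hi
        rcases hω i with h|h
        · exact h
        · exact absurd h (Finset.mem_filter.mp hi).2
      rw [Finset.sum_congr rfl hval, Finset.sum_const]
      have : (Finset.univ.filter (fun i => ¬(Z i ω = -1))).card = n - κ ω := by
        have hk : κ ω = (Finset.univ.filter (fun i => Z i ω = -1)).card := rfl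
        simp only [Finset.card_univ, Fintype.card_fin] at hcard
        omega
      rw [this]; simp
    have := hsplit
    rw [h1, h2] at this
    show (∑ i, Z i ω) = (n:ℝ) - 2 * κ ω
    rw [← this]
    push_cast [Nat.cast_sub (hκn ω)]
    ring
  -- atoms
  set A : ℕ → Set Ω := fun k => S ⁻¹' {(n:ℝ) - 2*k} with hA_def
  have hAmeas : ∀ k, MeasurableSet (A k) := fun k => hSmeas (measurableSet_singleton _)
  set P : ℕ → ℝ := fun k => (ℙ (A k)).toReal with hP_def
  have hPnn : ∀ k, 0 ≤ P k := fun k => ENNReal.toReal_nonneg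
  have hmemA : ∀ ω, (∀ i, Z i ω = 1 ∨ Z i ω = -1) → ∀ k, (ω ∈ A k ↔ k = κ ω) := by
    intro ω hω k
    rw [hA_def]
    simp only [Set.mem_preimage, Set.mem_singleton_iff]
    rw [hSval ω hω]
    constructor
    · intro h
      have : (κ ω : ℝ) = (k : ℝ) := by linarith
      exact_mod_cast this.symm
    · intro h; rw [h]
  -- decomposition helpers
  have hdecompC : ∀ (F : Ω → ℂ) (c : ℕ → ℂ),
      (∀ ω, (∀ i, Z i ω = 1 ∨ Z i ω = -1) → F ω = c (κ ω)) →
      ∫ ω, F ω = ∑ k ∈ Finset.range (n+1), ((P k : ℝ) : ℂ) * c k := by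
    intro F c hF
    apply my_integral_sum_indicator (fun k _ => hAmeas k)
    filter_upwards [hG] with ω hω
    rw [hF ω hω]
    symm
    rw [Finset.sum_eq_single (κ ω)]
    · rw [Set.indicator_of_mem ((hmemA ω hω (κ ω)).mpr rfl)]
    · intro k _ hkκ
      exact Set.indicator_of_notMem (fun hmem => hkκ ((hmemA ω hω k).mp hmem)) _
    · intro hk
      exact absurd (Finset.mem_range.mpr (Nat.lt_succ_of_le (hκn ω))) hk
  have hdecompR : ∀ (F : Ω → ℝ) (c : ℕ → ℝ),
      (∀ ω, (∀ i, Z i ω = 1 ∨ Z i ω = -1) → F ω = c (κ ω)) →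
      ∫ ω, F ω = ∑ k ∈ Finset.range (n+1), P k * c k := by
    intro F c hF
    apply my_integral_sum_indicator_real (fun k _ => hAmeas k)
    filter_upwards [hG] with ω hω
    rw [hF ω hω]
    symm
    rw [Finset.sum_eq_single (κ ω)]
    · rw [Set.indicator_of_mem ((hmemA ω hω (κ ω)).mpr rfl)]
    · intro k _ hkκ
      exact Set.indicator_of_notMem (fun hmem => hkκ ((hmemA ω hω k).mp hmem)) _
    · intro hk
      exact absurd (Finset.mem_range.mpr (Nat.lt_succ_of_le (hκn ω))) hk
  -- the tilted characteristic function identity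
  have hI1 : ∀ θ : ℝ, ∑ k ∈ Finset.range (n+1), ((P k : ℝ) : ℂ) *
        (((ρ:ℝ):ℂ) * Complex.exp (θ * Complex.I))^(n-k) *
        (((ρ⁻¹:ℝ):ℂ) * Complex.exp (-(θ * Complex.I)))^k
      = ((σ * Real.cos θ : ℝ) : ℂ)^n := by
    intro θ
    set u : ℂ := ((ρ:ℝ):ℂ) * Complex.exp (θ * Complex.I) with hu_def
    set v : ℂ := ((ρ⁻¹:ℝ):ℂ) * Complex.exp (-(θ * Complex.I)) with hv_def
    set αc : ℂ := (u + v)/2 with hαc_def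
    set βc : ℂ := (u - v)/2 with hβc_def
    set W : Fin n → Ω → ℂ := fun i ω => αc + βc * (Z i ω : ℂ) with hW_def
    have hWm : ∀ i, Measurable (W i) := fun i =>
      measurable_const.add (measurable_const.mul (Complex.measurable_ofReal.comp (hmeas i)))
    have hWind : iIndepFun W ℙ :=
      hindep.comp (fun _ (x:ℝ) => αc + βc * x)
        (fun _ => measurable_const.add (measurable_const.mul Complex.measurable_ofReal))
    have hWb : ∀ i, ∀ᵐ ω ∂ℙ, ‖W i ω‖ ≤ ‖αc‖ + ‖βc‖ := fun i =>
      (habs i).mono (fun ω h => by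
        calc ‖αc + βc * (Z i ω:ℂ)‖ ≤ ‖αc‖ + ‖βc * (Z i ω:ℂ)‖ := norm_add_le _ _
          _ = ‖αc‖ + ‖βc‖ * |Z i ω| := by
              rw [norm_mul, Complex.norm_real, Real.norm_eq_abs]
          _ ≤ ‖αc‖ + ‖βc‖ * 1 := by
              exact add_le_add le_rfl (mul_le_mul_of_nonneg_left h (norm_nonneg _))
          _ = ‖αc‖ + ‖βc‖ := by ring)
    have hprod : ∀ ω, (∀ i, Z i ω = 1 ∨ Z i ω = -1) →
        (∏ i, W i ω) = u^(n - κ ω) * v^(κ ω) := by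
      intro ω hω
      have hsplit := Finset.prod_filter_mul_prod_filter_not Finset.univ
        (fun i => Z i ω = -1) (fun i => W i ω)
      have hcard := Finset.card_filter_add_card_filter_not
        (s := Finset.univ) (p := fun i : Fin n => Z i ω = -1)
      have h1 : ∏ i ∈ Finset.univ.filter (fun i => Z i ω = -1), W i ω = v ^ κ ω := by
        have hval : ∀ i ∈ Finset.univ.filter (fun i => Z i ω = -1), W i ω = v := by
          intro i hi
          have hz : Z i ω = -1 := (Finset.mem_filter.mp hi).2
          rw [hW_def]
          simp only [hz]
          rw [hαc_def, hβc_def]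
          push_cast
          ring
        rw [Finset.prod_congr rfl hval, Finset.prod_const]
      have h2 : ∏ i ∈ Finset.univ.filter (fun i => ¬(Z i ω = -1)), W i ω = u ^ (n - κ ω) := by
        have hval : ∀ i ∈ Finset.univ.filter (fun i => ¬(Z i ω = -1)), W i ω = u := by
          intro i hi
          have hz : Z i ω = 1 := by
            rcases hω i with h|h
            · exact h
            · exact absurd h (Finset.mem_filter.mp hi).2
          rw [hW_def]
          simp only [hz]
          rw [hαc_def, hβc_def]
          push_cast
          ring
        rw [Finset.prod_congr rfl hval, Finset.prod_const]
        congr 1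
        have hk : κ ω = (Finset.univ.filter (fun i => Z i ω = -1)).card := rfl
        simp only [Finset.card_univ, Fintype.card_fin] at hcard
        omega
      rw [← hsplit, h1, h2]
      ring
    have hL : ∫ ω, ∏ i, W i ω = ∑ k ∈ Finset.range (n+1), ((P k : ℝ):ℂ) * (u^(n-k) * v^k) :=
      hdecompC _ (fun k => u^(n-k) * v^k) hprod
    have hone : ∀ i, ∫ ω, W i ω = αc + βc * (a:ℂ) := by
      intro i
      have hZC : Integrable (fun ω => (Z i ω : ℂ)) ℙ := (hZint i).ofReal
      rw [hW_def]
      simp only []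
      rw [integral_add (integrable_const _) (hZC.const_mul βc), integral_const]
      simp only [measure_univ, probReal_univ, one_smul]
      rw [integral_const_mul]
      have hcast : ∫ ω, ((Z i ω : ℝ) : ℂ) = ((∫ ω, Z i ω : ℝ) : ℂ) := by
        have := integral_ofReal (𝕜 := ℂ) (f := Z i) (μ := ℙ)
        simpa using this
      rw [hcast, hmean i]
    have hR : ∫ ω, ∏ i, W i ω = (αc + βc * (a:ℂ))^n := by
      rw [indep_integral_prod hWind hWm hWb]
      rw [Finset.prod_congr rfl (fun i _ => hone i), Finset.prod_const, Finset.card_univ,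
        Fintype.card_fin]
    have hαβa : αc + βc * (a:ℂ) = ((σ * Real.cos θ : ℝ) : ℂ) := by
      have h1 : αc + βc * (a:ℂ) = ((p:ℝ):ℂ) * u + ((q:ℝ):ℂ) * v := by
        rw [hαc_def, hβc_def, hp_def, hq_def]
        push_cast
        ring
      rw [h1, hu_def, hv_def]
      have hexp1 : Complex.exp ((θ:ℂ) * Complex.I)
          = Complex.cos θ + Complex.sin θ * Complex.I := Complex.exp_mul_I _
      have hexp2 : Complex.exp (-((θ:ℂ) * Complex.I))
          = Complex.cos θ - Complex.sin θ * Complex.I := by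
        rw [show -((θ:ℂ) * Complex.I) = (-θ:ℂ) * Complex.I by ring, Complex.exp_mul_I,
          Complex.cos_neg, Complex.sin_neg]
        ring
      have : ((p:ℝ):ℂ) * (((ρ:ℝ):ℂ)) * (Complex.cos θ + Complex.sin θ * Complex.I)
          + ((q:ℝ):ℂ) * (((ρ⁻¹:ℝ):ℂ)) * (Complex.cos θ - Complex.sin θ * Complex.I)
          = ((spq:ℝ):ℂ) * (2 * Complex.cos θ) := by
        have e1 : ((p:ℝ):ℂ) * ((ρ:ℝ):ℂ) = ((spq:ℝ):ℂ) := by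
          rw [← Complex.ofReal_mul, hpρ]
        have e2 : ((q:ℝ):ℂ) * ((ρ⁻¹:ℝ):ℂ) = ((spq:ℝ):ℂ) := by
          rw [← Complex.ofReal_mul, hqρ]
        calc ((p:ℝ):ℂ) * (((ρ:ℝ):ℂ)) * (Complex.cos θ + Complex.sin θ * Complex.I)
            + ((q:ℝ):ℂ) * (((ρ⁻¹:ℝ):ℂ)) * (Complex.cos θ - Complex.sin θ * Complex.I)
            = ((p:ℝ):ℂ) * ((ρ:ℝ):ℂ) * (Complex.cos θ + Complex.sin θ * Complex.I)
              + ((q:ℝ):ℂ) * ((ρ⁻¹:ℝ):ℂ) * (Complex.cos θ - Complex.sin θ * Complex.I) := by ring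
          _ = ((spq:ℝ):ℂ) * (2 * Complex.cos θ) := by rw [e1, e2]; ring
      calc ((p:ℝ):ℂ) * (((ρ:ℝ):ℂ) * Complex.exp ((θ:ℂ) * Complex.I))
            + ((q:ℝ):ℂ) * (((ρ⁻¹:ℝ):ℂ) * Complex.exp (-((θ:ℂ) * Complex.I)))
          = ((p:ℝ):ℂ) * (((ρ:ℝ):ℂ)) * (Complex.cos θ + Complex.sin θ * Complex.I)
            + ((q:ℝ):ℂ) * (((ρ⁻¹:ℝ):ℂ)) * (Complex.cos θ - Complex.sin θ * Complex.I) := by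
            rw [hexp1, hexp2]; ring
        _ = ((spq:ℝ):ℂ) * (2 * Complex.cos θ) := this
        _ = ((σ * Real.cos θ : ℝ) : ℂ) := by
            rw [hσval]
            push_cast [Complex.ofReal_cos]
            ring
    calc ∑ k ∈ Finset.range (n+1), ((P k : ℝ) : ℂ) * u^(n-k) * v^k
        = ∑ k ∈ Finset.range (n+1), ((P k : ℝ) : ℂ) * (u^(n-k) * v^k) := by
          refine Finset.sum_congr rfl fun k _ => by ring
      _ = ∫ ω, ∏ i, W i ω := hL.symm
      _ = (αc + βc * (a:ℂ))^n := hR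
      _ = ((σ * Real.cos θ : ℝ) : ℂ)^n := by rw [hαβa]
  -- cosine integral
  set In : ℝ := ∫ θ in (-(π/2))..(π/2), Real.cos θ ^ n with hIn_def
  have hle2 : -(π/2) ≤ π/2 := by linarith [pi_pos]
  have hInnn : 0 ≤ In := by
    rw [hIn_def]
    apply intervalIntegral.integral_nonneg hle2
    intro θ hθ
    exact pow_nonneg (Real.cos_nonneg_of_mem_Icc hθ) n
  have hInle : In ≤ 2 * Real.sqrt π / Real.sqrt n := my_cos_pow_integral n hn
  set rfacs : ℕ → ℝ := fun k => ρ^(n-k) * (ρ⁻¹)^k with hrfac_def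
  have hrfacs_pos : ∀ k, 0 < rfacs k := fun k => by
    rw [hrfac_def]; positivity
  -- atom bound via Fourier extraction
  have hatom : ∀ k₀ ∈ Finset.range (n+1), π * (P k₀ * rfacs k₀) ≤ σ^n * In := by
    intro k₀ hk₀
    have hk₀n : k₀ ≤ n := Nat.lt_succ_iff.mp (Finset.mem_range.mp hk₀)
    have hterm : ∀ k, k ≤ n → ∀ θ : ℝ,
        (((P k : ℝ):ℂ) * ((((ρ:ℝ):ℂ) * Complex.exp (θ * Complex.I))^(n-k) *
            (((ρ⁻¹:ℝ):ℂ) * Complex.exp (-(θ * Complex.I)))^k))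
          * Complex.exp ((2*((-(n:ℤ) + 2*k₀ : ℤ)):ℂ) * Complex.I * θ / 2)
        = ((P k * rfacs k : ℝ):ℂ)
            * Complex.exp ((2*(((k₀:ℤ) - (k:ℤ) : ℤ)):ℂ) * Complex.I * θ) := by
      intro k hkn θ
      have e1 : (((ρ:ℝ):ℂ) * Complex.exp ((θ:ℂ) * Complex.I))^(n-k)
          = ((ρ:ℝ):ℂ)^(n-k) * Complex.exp (((n-k : ℕ):ℂ) * ((θ:ℂ) * Complex.I)) := by
        rw [mul_pow, ← Complex.exp_nat_mul]
      have e2 : (((ρ⁻¹:ℝ):ℂ) * Complex.exp (-((θ:ℂ) * Complex.I)))^k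
          = ((ρ⁻¹:ℝ):ℂ)^k * Complex.exp ((k:ℂ) * (-((θ:ℂ) * Complex.I))) := by
        rw [mul_pow, ← Complex.exp_nat_mul]
      rw [e1, e2]
      rw [show ((P k * rfacs k : ℝ):ℂ) = ((P k:ℝ):ℂ) * ((ρ^(n-k):ℝ):ℂ) * (((ρ⁻¹)^k:ℝ):ℂ) by
        rw [hrfac_def]; push_cast; ring]
      rw [show (((ρ:ℝ):ℂ))^(n-k) = ((ρ^(n-k):ℝ):ℂ) by push_cast; ring,
        show (((ρ⁻¹:ℝ):ℂ))^k = (((ρ⁻¹)^k:ℝ):ℂ) by push_cast; ring]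
      have harg : Complex.exp (((n-k : ℕ):ℂ) * ((θ:ℂ) * Complex.I))
            * Complex.exp ((k:ℂ) * (-((θ:ℂ) * Complex.I)))
            * Complex.exp ((2*((-(n:ℤ) + 2*k₀ : ℤ)):ℂ) * Complex.I * θ / 2)
          = Complex.exp ((2*(((k₀:ℤ) - (k:ℤ) : ℤ)):ℂ) * Complex.I * θ) := by
        rw [← Complex.exp_add, ← Complex.exp_add]
        congr 1
        push_cast [Nat.cast_sub hkn]
        ring
      calc ((P k:ℝ):ℂ) * (((ρ^(n-k):ℝ):ℂ) * Complex.exp (((n-k : ℕ):ℂ) * ((θ:ℂ) * Complex.I)) *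
              ((((ρ⁻¹)^k:ℝ):ℂ) * Complex.exp ((k:ℂ) * (-((θ:ℂ) * Complex.I)))))
            * Complex.exp ((2*((-(n:ℤ) + 2*k₀ : ℤ)):ℂ) * Complex.I * θ / 2)
          = ((P k:ℝ):ℂ) * ((ρ^(n-k):ℝ):ℂ) * (((ρ⁻¹)^k:ℝ):ℂ) *
              (Complex.exp (((n-k : ℕ):ℂ) * ((θ:ℂ) * Complex.I))
               * Complex.exp ((k:ℂ) * (-((θ:ℂ) * Complex.I)))
               * Complex.exp ((2*((-(n:ℤ) + 2*k₀ : ℤ)):ℂ) * Complex.I * θ / 2)) := by ring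
        _ = ((P k:ℝ):ℂ) * ((ρ^(n-k):ℝ):ℂ) * (((ρ⁻¹)^k:ℝ):ℂ) *
              Complex.exp ((2*(((k₀:ℤ) - (k:ℤ) : ℤ)):ℂ) * Complex.I * θ) := by rw [harg]
    set Eexp : ℝ → ℂ := fun θ => Complex.exp ((2*((-(n:ℤ) + 2*k₀ : ℤ)):ℂ) * Complex.I * θ / 2)
      with hEexp_def
    have hcontk : ∀ k ∈ Finset.range (n+1), IntervalIntegrable
        (fun θ:ℝ => ((P k * rfacs k : ℝ):ℂ)
          * Complex.exp ((2*(((k₀:ℤ) - (k:ℤ) : ℤ)):ℂ) * Complex.I * θ)) MeasureTheory.volume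
        (-(π/2)) (π/2) := by
      intro k _
      apply Continuous.intervalIntegrable
      apply continuous_const.mul
      apply Complex.continuous_exp.comp
      exact continuous_const.mul Complex.continuous_ofReal
    have hiden : ((P k₀ * rfacs k₀ : ℝ):ℂ) * (π:ℂ)
        = ∫ θ in (-(π/2))..(π/2), ((σ * Real.cos θ : ℝ):ℂ)^n * Eexp θ := by
      have h1 : ∀ θ:ℝ, ((σ * Real.cos θ:ℝ):ℂ)^n * Eexp θ
          = ∑ k ∈ Finset.range (n+1), ((P k * rfacs k:ℝ):ℂ)
              * Complex.exp ((2*(((k₀:ℤ) - (k:ℤ) : ℤ)):ℂ) * Complex.I * θ) := by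
        intro θ
        rw [← hI1 θ, Finset.sum_mul]
        refine Finset.sum_congr rfl fun k hk => ?_
        have hkn : k ≤ n := Nat.lt_succ_iff.mp (Finset.mem_range.mp hk)
        rw [← hterm k hkn θ, hEexp_def]
        ring
      calc ((P k₀ * rfacs k₀ : ℝ):ℂ) * (π:ℂ)
          = ∑ k ∈ Finset.range (n+1), (if k = k₀ then ((P k * rfacs k:ℝ):ℂ) * (π:ℂ) else 0) := by
            rw [Finset.sum_ite_eq' (Finset.range (n+1)) k₀
              (fun k => ((P k * rfacs k:ℝ):ℂ) * (π:ℂ))]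
            rw [if_pos hk₀]
        _ = ∑ k ∈ Finset.range (n+1), ∫ θ in (-(π/2))..(π/2),
              ((P k * rfacs k:ℝ):ℂ)
                * Complex.exp ((2*(((k₀:ℤ) - (k:ℤ) : ℤ)):ℂ) * Complex.I * θ) := by
            refine Finset.sum_congr rfl fun k hk => ?_
            rw [intervalIntegral.integral_const_mul, my_exp_orth ((k₀:ℤ) - (k:ℤ))]
            by_cases hkk : k = k₀
            · rw [if_pos hkk, if_pos (by omega : (k₀:ℤ) - (k:ℤ) = 0), hkk]
            · rw [if_neg hkk, if_neg (by omega : ¬ ((k₀:ℤ) - (k:ℤ) = 0)), mul_zero]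
        _ = ∫ θ in (-(π/2))..(π/2), ∑ k ∈ Finset.range (n+1), ((P k * rfacs k:ℝ):ℂ)
              * Complex.exp ((2*(((k₀:ℤ) - (k:ℤ) : ℤ)):ℂ) * Complex.I * θ) :=
            (intervalIntegral.integral_finset_sum hcontk).symm
        _ = ∫ θ in (-(π/2))..(π/2), ((σ * Real.cos θ : ℝ):ℂ)^n * Eexp θ := by
            apply intervalIntegral.integral_congr
            intro θ _
            exact (h1 θ).symm
    have hnormb : ‖∫ θ in (-(π/2))..(π/2), ((σ * Real.cos θ:ℝ):ℂ)^n * Eexp θ‖ ≤ σ^n * In := by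
      refine (intervalIntegral.norm_integral_le_integral_norm hle2).trans ?_
      have heq : Set.EqOn (fun θ:ℝ => ‖((σ * Real.cos θ:ℝ):ℂ)^n * Eexp θ‖)
          (fun θ:ℝ => σ^n * Real.cos θ^n) (Set.uIcc (-(π/2)) (π/2)) := by
        intro θ hθ
        rw [Set.uIcc_of_le hle2] at hθ
        have hcosnn := Real.cos_nonneg_of_mem_Icc hθ
        simp only []
        rw [norm_mul, norm_pow, Complex.norm_real, Real.norm_eq_abs,
          abs_of_nonneg (mul_nonneg hσ hcosnn)]
        have hexp1 : ‖Eexp θ‖ = 1 := by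
          rw [hEexp_def]
          rw [Complex.norm_exp]
          have : ((2*((-(n:ℤ) + 2*k₀ : ℤ)):ℂ) * Complex.I * (θ:ℂ) / 2).re = 0 := by
            simp [Complex.div_re]
          rw [this, Real.exp_zero]
        rw [hexp1, mul_one, mul_pow]
      rw [intervalIntegral.integral_congr heq, intervalIntegral.integral_const_mul]
    have hfin : ‖((P k₀ * rfacs k₀ : ℝ):ℂ) * (π:ℂ)‖ = P k₀ * rfacs k₀ * π := by
      rw [norm_mul, Complex.norm_real, Complex.norm_real, Real.norm_eq_abs, Real.norm_eq_abs,
        abs_of_nonneg (mul_nonneg (hPnn k₀) (hrfacs_pos k₀).le), abs_of_nonneg pi_pos.le]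
    calc π * (P k₀ * rfacs k₀) = P k₀ * rfacs k₀ * π := by ring
      _ = ‖((P k₀ * rfacs k₀ : ℝ):ℂ) * (π:ℂ)‖ := hfin.symm
      _ = ‖∫ θ in (-(π/2))..(π/2), ((σ * Real.cos θ:ℝ):ℂ)^n * Eexp θ‖ := by rw [← hiden]
      _ ≤ σ^n * In := hnormb
  -- tail bound for the negative part
  have hbound : ∀ k ∈ Finset.range (n+1), P k * ((2*k - n : ℕ):ℝ)
      ≤ (σ^n * In/π) * (((2*k-n:ℕ):ℝ) * ρ^(2*k-n : ℕ)) := by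
    intro k hk
    rcases le_or_gt (2*k) n with h2k | h2k
    · have hz : 2*k - n = 0 := by omega
      rw [hz]
      simp
    · have hre : rfacs k * ρ^(2*k-n) = 1 := by
        rw [hrfac_def]
        have h1 : ρ^(n-k) * ρ^(2*k-n) = ρ^k := by
          rw [← pow_add]; congr 1
          have hkn : k ≤ n := Nat.lt_succ_iff.mp (Finset.mem_range.mp hk)
          omega
        calc ρ^(n-k) * (ρ⁻¹)^k * ρ^(2*k-n) = (ρ^(n-k) * ρ^(2*k-n)) * (ρ⁻¹)^k := by ring
          _ = ρ^k * (ρ⁻¹)^k := by rw [h1]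
          _ = (ρ * ρ⁻¹)^k := (mul_pow _ _ _).symm
          _ = 1 := by rw [mul_inv_cancel₀ hρ0.ne', one_pow]
      have hPk : P k ≤ (σ^n * In/π) * ρ^(2*k-n) := by
        have h3 : P k * rfacs k ≤ σ^n * In / π := by
          rw [le_div_iff₀ pi_pos]
          have := hatom k hk
          linarith
        calc P k = (P k * rfacs k) * ρ^(2*k-n) := by
              rw [mul_assoc, hre, mul_one]
          _ ≤ (σ^n * In/π) * ρ^(2*k-n) :=
              mul_le_mul_of_nonneg_right h3 (by positivity)
      calc P k * ((2*k-n:ℕ):ℝ) ≤ ((σ^n*In/π) * ρ^(2*k-n)) * ((2*k-n:ℕ):ℝ) :=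
            mul_le_mul_of_nonneg_right hPk (by positivity)
        _ = (σ^n * In/π) * (((2*k-n:ℕ):ℝ) * ρ^(2*k-n)) := by ring
  -- the expectation of the negative part
  have hSneg_val : ∀ ω, (∀ i, Z i ω = 1 ∨ Z i ω = -1) →
      max (-S ω) 0 = ((2*(κ ω) - n : ℕ):ℝ) := by
    intro ω hω
    rw [hSval ω hω]
    rcases le_or_gt n (2*κ ω) with h2k | h2k
    · have hc : ((n:ℝ)) ≤ 2*(κ ω : ℝ) := by exact_mod_cast h2k
      rw [max_eq_left (by linarith)]
      push_cast [Nat.cast_sub h2k]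
      ring
    · have hc : 2*(κ ω : ℝ) < (n:ℝ) := by exact_mod_cast h2k
      rw [max_eq_right (by linarith)]
      have hz : 2*(κ ω) - n = 0 := by omega
      rw [hz]
      simp
  have hESneg : ∫ ω, max (-S ω) 0 = ∑ k ∈ Finset.range (n+1), P k * ((2*k-n:ℕ):ℝ) :=
    hdecompR _ (fun k => ((2*k-n:ℕ):ℝ)) hSneg_val
  have hSnegint : Integrable (fun ω => max (-S ω) 0) ℙ := by
    apply Integrable.mono' hSint.abs ((hSmeas.neg.max measurable_const).aestronglyMeasurable)
    filter_upwards with ω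
    rw [Real.norm_eq_abs, abs_of_nonneg (le_max_right _ _)]
    exact max_le (neg_le_abs _) (abs_nonneg _)
  have hSneg_le : ∫ ω, max (-S ω) 0 ≤ (σ^n * In/π) * (ρ/(1-ρ)^2) := by
    rw [hESneg]
    calc ∑ k ∈ Finset.range (n+1), P k * ((2*k-n:ℕ):ℝ)
        ≤ ∑ k ∈ Finset.range (n+1), (σ^n*In/π) * (((2*k-n:ℕ):ℝ) * ρ^(2*k-n:ℕ)) :=
          Finset.sum_le_sum hbound
      _ = (σ^n*In/π) * ∑ k ∈ Finset.range (n+1), ((2*k-n:ℕ):ℝ) * ρ^(2*k-n:ℕ) := by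
          rw [Finset.mul_sum]
      _ ≤ (σ^n*In/π) * (ρ/(1-ρ)^2) :=
          mul_le_mul_of_nonneg_left (my_tail_sum hρ0.le hρ1 n) (by positivity)
  have habsid : ∫ ω, |S ω| = (∫ ω, S ω) + 2 * ∫ ω, max (-S ω) 0 := by
    have hid : (fun ω => |S ω|) = fun ω => S ω + 2 * max (-S ω) 0 := by
      funext ω
      rcases le_or_gt 0 (S ω) with h|h
      · rw [abs_of_nonneg h, max_eq_right (by linarith)]; ring
      · rw [abs_of_neg h, max_eq_left (by linarith)]; ring
    rw [hid, integral_add hSint (hSnegint.const_mul 2), integral_const_mul]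
  have hn' : (0:ℝ) < n := Nat.cast_pos.mpr hn
  have hmain : ℙ[fun ω => |(1/(n:ℝ)) * ∑ i, Z i ω|] = (1/(n:ℝ)) * ∫ ω, |S ω| := by
    rw [← integral_const_mul]
    apply integral_congr_ae
    filter_upwards with ω
    rw [abs_mul, abs_of_pos (by positivity : (0:ℝ) < 1/(n:ℝ))]
  rw [hmain, habsid, hES]
  set X := ∫ ω, max (-S ω) 0 with hX_def
  have hXnn : 0 ≤ X := by
    rw [hX_def]
    exact integral_nonneg fun ω => le_max_right _ _
  have hn32 : (n:ℝ)^(3/2:ℝ) = n * Real.sqrt n := by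
    rw [show (3/2:ℝ) = 1 + 1/2 by norm_num, Real.rpow_add hn', Real.rpow_one,
      ← Real.sqrt_eq_rpow]
  rw [hn32]
  have hXb : X ≤ σ^n * (2*Real.sqrt π/Real.sqrt n)/π * (ρ/(1-ρ)^2) := by
    refine hSneg_le.trans ?_
    have h5 : σ^n * In/π ≤ σ^n * (2*Real.sqrt π/Real.sqrt n)/π := by gcongr
    exact mul_le_mul_of_nonneg_right h5 (by positivity)
  have h1 : (1/(n:ℝ)) * ((n:ℝ)*a + 2*X) = a + 2*X/n := by field_simp
  rw [h1]
  have h2 : 2*X/(n:ℝ) ≤ 2*(σ^n * (2*Real.sqrt π/Real.sqrt n)/π * (ρ/(1-ρ)^2))/n := by gcongr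
  have heq : 2*(σ^n * (2*Real.sqrt π/Real.sqrt n)/π * (ρ/(1-ρ)^2))/(n:ℝ)
      = 4*ρ/((1-ρ)^2*Real.sqrt π)/((n:ℝ)*Real.sqrt n) * σ^n := by
    have hπ : Real.sqrt π * Real.sqrt π = π := Real.mul_self_sqrt pi_pos.le
    have hρ1' : (1-ρ) ≠ 0 := ne_of_gt (by linarith)
    have hsn : Real.sqrt n ≠ 0 := ne_of_gt (Real.sqrt_pos.2 hn')
    have hsπ : Real.sqrt π ≠ 0 := ne_of_gt (Real.sqrt_pos.2 pi_pos)
    field_simp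
    linear_combination (4*(σ^n)) * hπ
  linarith [h2, heq ▸ h2]

end Aux

/-- Upper bound in Lemma MAD: for i.i.d. ±1-valued random variables with mean `a ≠ 0` and
variance `σ² = 1 - a²`, there is a finite constant `c* = c*(a)` (independent of `n`) with
`E|(1/n)∑ Zᵢ| ≤ |a| + (c*/n^{3/2}) σⁿ`. -/
theorem mad_upper_bound {Ω : Type*} [MeasureSpace Ω] [IsProbabilityMeasure (ℙ : Measure Ω)]
    (a σ : ℝ) (ha : a ≠ 0) (hσ : 0 ≤ σ) (hσ2 : σ ^ 2 = 1 - a ^ 2) :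
    ∃ c : ℝ, ∀ (n : ℕ), 0 < n → ∀ (Z : Fin n → Ω → ℝ),
      (∀ i, Measurable (Z i)) →
      iIndepFun Z ℙ →
      (∀ i j, IdentDistrib (Z i) (Z j) ℙ ℙ) →
      (∀ i, ∀ᵐ ω ∂ℙ, Z i ω = 1 ∨ Z i ω = -1) →
      (∀ i, ℙ[Z i] = a) →
      ℙ[fun ω => |(1 / (n : ℝ)) * ∑ i, Z i ω|]
        ≤ |a| + c / (n : ℝ) ^ (3 / 2 : ℝ) * σ ^ n := by
  by_cases hsq : a^2 = 1
  · refine ⟨0, ?_⟩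
    intro n hn Z hm hind hid hpm hmean
    have habs1 : |a| = 1 := by
      have h0 : (a-1)*(a+1) = 0 := by nlinarith
      rcases mul_eq_zero.mp h0 with h|h
      · have : a = 1 := by linarith
        simp [this]
      · have : a = -1 := by linarith
        simp [this]
    have hσ0 : σ = 0 := by
      have h0 : σ^2 = 0 := by rw [hσ2, hsq]; ring
      exact (pow_eq_zero_iff two_ne_zero).mp h0
    have hb : ∀ᵐ ω ∂ℙ, ‖|1/(n:ℝ) * ∑ i, Z i ω|‖ ≤ 1 := by
      filter_upwards [ae_all_iff.2 hpm] with ω hω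
      rw [Real.norm_eq_abs, abs_abs, abs_mul]
      have h1 : |∑ i, Z i ω| ≤ (n:ℝ) := by
        calc |∑ i, Z i ω| ≤ ∑ i, |Z i ω| := Finset.abs_sum_le_sum_abs _ _
          _ ≤ ∑ _i : Fin n, (1:ℝ) :=
              Finset.sum_le_sum (fun i _ => by rcases hω i with h|h <;> simp [h])
          _ = n := by simp
      have h2 : |1/(n:ℝ)| = 1/(n:ℝ) := abs_of_pos (by positivity)
      rw [h2]
      calc (1/(n:ℝ)) * |∑ i, Z i ω| ≤ (1/(n:ℝ)) * n := by
            exact mul_le_mul_of_nonneg_left h1 (by positivity)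
        _ = 1 := by field_simp
    have hmeasf : Measurable (fun ω => |1/(n:ℝ) * ∑ i, Z i ω|) :=
      ((Finset.measurable_sum _ fun i _ => hm i).const_mul _).abs
    have hint : Integrable (fun ω => |1/(n:ℝ) * ∑ i, Z i ω|) ℙ :=
      Integrable.mono' (integrable_const 1) hmeasf.aestronglyMeasurable hb
    calc ℙ[fun ω => |(1/(n:ℝ)) * ∑ i, Z i ω|] ≤ ∫ _ω, (1:ℝ) := by
          apply integral_mono_ae hint (integrable_const 1)
          filter_upwards [hb] with ω hω
          rw [Real.norm_eq_abs, abs_abs] at hω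
          exact hω
      _ = 1 := by simp
      _ ≤ |a| + 0 / (n : ℝ) ^ (3 / 2 : ℝ) * σ ^ n := by
          rw [habs1]
          simp
  · have ha2 : a^2 < 1 := lt_of_le_of_ne (by nlinarith [sq_nonneg σ]) hsq
    have han : -1 < a := by nlinarith [sq_nonneg (a+1)]
    have hap : a < 1 := by nlinarith [sq_nonneg (a-1)]
    rcases ha.lt_or_gt with haneg | hapos
    · refine ⟨4 * Real.sqrt ((1-(-a))/(1+(-a)))
        / ((1 - Real.sqrt ((1-(-a))/(1+(-a))))^2 * Real.sqrt π), ?_⟩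
      intro n hn Z hm hind hid hpm hmean
      have hkey := key_lemma (-a) σ (by linarith) (by linarith) hσ (by rw [hσ2]; ring) n hn
        (fun i ω => -(Z i ω))
        (fun i => (hm i).neg)
        (hind.comp (fun _ (x:ℝ) => -x) (fun _ => measurable_neg))
        (fun i => (hpm i).mono fun ω h => by
          rcases h with h|h
          · right; simp [h]
          · left; simp [h])
        (fun i => by
          have : ∫ ω, -(Z i ω) = -∫ ω, Z i ω := integral_neg _
          rw [this, hmean i])
      rw [abs_of_neg haneg]
      refine le_trans (le_of_eq ?_) hkey
      apply integral_congr_ae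
      filter_upwards with ω
      have : ∑ i, -(Z i ω) = -∑ i, Z i ω := by
        rw [Finset.sum_neg_distrib]
      rw [this, show (1/(n:ℝ)) * -(∑ i, Z i ω) = -((1/(n:ℝ)) * ∑ i, Z i ω) by ring, abs_neg]
    · refine ⟨4 * Real.sqrt ((1-a)/(1+a))
        / ((1 - Real.sqrt ((1-a)/(1+a)))^2 * Real.sqrt π), ?_⟩
      intro n hn Z hm hind hid hpm hmean
      have hkey := key_lemma a σ hapos hap hσ hσ2 n hn Z hm hind hpm hmean
      rwa [abs_of_pos hapos]
end

section
/- Let B = B(n,p) be a binomial random variable with parameters n even and p ∈ (0, 1/2), and let σ = 2√(p(1-p)). Then there exists a constant c depending only on p such that E[(B - n/2)⁺] ≤ (c/√n) σⁿ for all even n. -/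
open Finset

lemma cb_sqrt_le (m : ℕ) :
    (Nat.centralBinom m : ℝ) * Real.sqrt (m + 1/2) ≤ 4 ^ m := by
  induction m with
  | zero =>
    simp [Nat.centralBinom]
    rw [inv_le_one_iff₀]
    right
    rw [show (1:ℝ) = Real.sqrt 1 by simp]
    exact Real.sqrt_le_sqrt (by norm_num)
  | succ m ih =>
    set B : ℝ := (Nat.centralBinom m : ℝ) with hB
    set B' : ℝ := (Nat.centralBinom (m+1) : ℝ) with hB'
    set s : ℝ := Real.sqrt (m + 1/2) with hsdef
    set t : ℝ := Real.sqrt ((m:ℝ) + 1 + 1/2) with htdef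
    have hs0 : 0 ≤ s := Real.sqrt_nonneg _
    have ht0 : 0 ≤ t := Real.sqrt_nonneg _
    have hs2 : s ^ 2 = (m:ℝ) + 1/2 := Real.sq_sqrt (by positivity)
    have ht2 : t ^ 2 = (m:ℝ) + 1 + 1/2 := Real.sq_sqrt (by positivity)
    have hB0 : (0:ℝ) ≤ B := Nat.cast_nonneg _
    have h2 : ((2*(m:ℝ)+1) * t)^2 ≤ (2*((m:ℝ)+1) * s)^2 := by
      have hm0 : (0:ℝ) ≤ (m:ℝ) := Nat.cast_nonneg _
      rw [mul_pow, mul_pow, hs2, ht2]; nlinarith [hm0]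
    have key : (2*(m:ℝ)+1) * t ≤ 2*((m:ℝ)+1) * s := by
      have ha : (0:ℝ) ≤ (2*(m:ℝ)+1) * t := by positivity
      have hb : (0:ℝ) ≤ 2*((m:ℝ)+1) * s := by positivity
      nlinarith [h2, ha, hb]
    have hrec : ((m:ℝ)+1) * B' = 2*(2*(m:ℝ)+1) * B := by
      rw [hB, hB']; exact_mod_cast Nat.succ_mul_centralBinom_succ m
    have rect : ((m:ℝ)+1) * (B' * t) = 2*((2*(m:ℝ)+1)*t) * B := by
      linear_combination t * hrec
    have step : ((m:ℝ)+1) * (B' * t) ≤ ((m:ℝ)+1) * 4^(m+1) := by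
      rw [rect]
      calc 2*((2*(m:ℝ)+1)*t) * B ≤ 2*(2*((m:ℝ)+1)*s) * B := by
            apply mul_le_mul_of_nonneg_right _ hB0
            linarith
        _ = (4*((m:ℝ)+1)) * (B * s) := by ring
        _ ≤ (4*((m:ℝ)+1)) * 4^m := by
            apply mul_le_mul_of_nonneg_left ih (by positivity)
        _ = ((m:ℝ)+1) * 4^(m+1) := by ring
    have hmpos : (0:ℝ) < (m:ℝ)+1 := by positivity
    have := le_of_mul_le_mul_left (by exact step) hmpos
    calc B' * Real.sqrt (↑(m+1) + 1/2) = B' * t := by rw [htdef]; push_cast; ring_nf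
      _ ≤ 4^(m+1) := this

/-- For `B = B(n,p)` binomial with `p ∈ (0,1/2)`, there is a constant `c = c(p)` such that
for all even `n`, `E[(B - n/2)⁺] ≤ (c/√n) σⁿ` with `σ = 2√(p(1-p))`. -/
theorem binomial_plus_part_upper_bound (p : ℝ) (hp0 : 0 < p) (hp : p < 1 / 2) :
    ∃ c : ℝ, ∀ n : ℕ, Even n →
      ∑ k ∈ Finset.range (n + 1),
          (n.choose k : ℝ) * p ^ k * (1 - p) ^ (n - k) * max ((k : ℝ) - n / 2) 0
        ≤ c / Real.sqrt n * (2 * Real.sqrt (p * (1 - p))) ^ n := by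
  set q : ℝ := 1 - p with hqdef
  have hq0 : 0 < q := by rw [hqdef]; linarith
  set r : ℝ := p / q with hrdef
  have hr0 : 0 ≤ r := by positivity
  have hr1 : r < 1 := by
    rw [hrdef, div_lt_one hq0]; rw [hqdef]; linarith
  set S : ℝ := r / (1 - r)^2 with hSdef
  have hS0 : 0 ≤ S := by
    apply div_nonneg hr0; positivity
  refine ⟨Real.sqrt 2 * S, ?_⟩
  rintro n ⟨m, rfl⟩
  rcases Nat.eq_zero_or_pos m with hm | hm
  · subst hm; simp
  -- now m ≥ 1
  have hmR : (1:ℝ) ≤ (m:ℝ) := by exact_mod_cast hm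
  set CB : ℝ := (Nat.centralBinom m : ℝ) with hCBdef
  have hCB0 : (0:ℝ) ≤ CB := Nat.cast_nonneg _
  set PQ : ℝ := (p * q)^m with hPQdef
  have hPQ0 : (0:ℝ) ≤ PQ := by positivity
  -- termwise bound
  have term_bound : ∀ k ∈ Finset.range (m + m + 1),
      ((m+m).choose k : ℝ) * p ^ k * q ^ (m+m-k) * max ((k : ℝ) - (↑(m+m)) / 2) 0
        ≤ CB * PQ * ((↑(k - m) : ℝ) * r ^ (k - m)) := by
    intro k hk
    rw [Finset.mem_range] at hk
    have hmmc : ((↑(m+m)):ℝ)/2 = (m:ℝ) := by push_cast; ring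
    rw [hmmc]
    rcases le_or_gt k m with hkm | hkm
    · have : max ((k:ℝ) - m) 0 = 0 := by
        apply max_eq_right; have : (k:ℝ) ≤ m := by exact_mod_cast hkm
        linarith
      rw [this, mul_zero]
      positivity
    · -- k > m
      obtain ⟨j, rfl⟩ : ∃ j, k = m + j := ⟨k - m, by omega⟩
      have hj1 : 1 ≤ j := by omega
      have hjm : j ≤ m := by omega
      have hsub : m + j - m = j := by omega
      have hsub2 : m + m - (m + j) = m - j := by omega
      rw [hsub, hsub2]
      have hmax : max ((↑(m+j):ℝ) - m) 0 = (j:ℝ) := by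
        rw [max_eq_left]
        · push_cast; ring
        · push_cast
          have : (0:ℝ) ≤ (j:ℝ) := Nat.cast_nonneg _
          linarith
      rw [hmax]
      have hpq : p ^ (m+j) * q ^ (m-j) = PQ * r ^ j := by
        rw [hPQdef, hrdef, div_pow, ← mul_div_assoc,
          eq_div_iff (by positivity : (q:ℝ)^j ≠ 0)]
        rw [mul_assoc (p ^ (m+j)), ← pow_add, Nat.sub_add_cancel hjm]
        rw [mul_pow, pow_add]; ring
      have hch : ((m+m).choose (m+j) : ℝ) ≤ CB := by
        rw [hCBdef]
        exact_mod_cast (by rw [← two_mul]; exact Nat.choose_le_centralBinom (m+j) m :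
          (m+m).choose (m+j) ≤ Nat.centralBinom m)
      calc ((m+m).choose (m+j) : ℝ) * p ^ (m+j) * q ^ (m-j) * (j:ℝ)
          = ((m+m).choose (m+j) : ℝ) * (p ^ (m+j) * q ^ (m-j)) * (j:ℝ) := by ring
        _ ≤ CB * (p ^ (m+j) * q ^ (m-j)) * (j:ℝ) := by
            apply mul_le_mul_of_nonneg_right (mul_le_mul_of_nonneg_right hch (by positivity))
            positivity
        _ = CB * PQ * ((j:ℝ) * r ^ j) := by rw [hpq]; ring
  -- sum of the series bound
  have series_bound : ∑ k ∈ Finset.range (m + m + 1), ((↑(k - m) : ℝ) * r ^ (k - m)) ≤ S := by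
    have hsplit : ∑ k ∈ Finset.range (m + m + 1), ((↑(k - m) : ℝ) * r ^ (k - m))
        = ∑ j ∈ Finset.range (m + 1), ((j : ℝ) * r ^ j) := by
      rw [Finset.range_eq_Ico, ← Finset.sum_Ico_consecutive _ (Nat.zero_le m) (by omega)]
      have h1 : ∑ k ∈ Finset.Ico 0 m, ((↑(k - m) : ℝ) * r ^ (k - m)) = 0 := by
        apply Finset.sum_eq_zero
        intro k hk
        rw [Finset.mem_Ico] at hk
        have : k - m = 0 := by omega
        rw [this]; simp
      rw [h1, zero_add, Finset.sum_Ico_eq_sum_range]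
      have h2 : m + m + 1 - m = m + 1 := by omega
      rw [h2]
      apply Finset.sum_congr rfl
      intro j _
      have h3 : m + j - m = j := by omega
      rw [h3]
    rw [hsplit, hSdef]
    have hnorm : ‖r‖ < 1 := by rw [Real.norm_eq_abs, abs_of_nonneg hr0]; exact hr1
    have hsum := hasSum_coe_mul_geometric_of_norm_lt_one (𝕜 := ℝ) hnorm
    calc ∑ j ∈ Finset.range (m + 1), ((j : ℝ) * r ^ j)
        ≤ ∑' j : ℕ, ((j : ℝ) * r ^ j) := by
          apply Summable.sum_le_tsum _ (fun i _ => by positivity) hsum.summable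
      _ = r / (1 - r)^2 := hsum.tsum_eq
  -- combine
  have main : ∑ k ∈ Finset.range (m + m + 1),
      ((m+m).choose k : ℝ) * p ^ k * q ^ (m+m-k) * max ((k : ℝ) - (↑(m+m)) / 2) 0
        ≤ CB * PQ * S := by
    calc ∑ k ∈ Finset.range (m + m + 1),
        ((m+m).choose k : ℝ) * p ^ k * q ^ (m+m-k) * max ((k : ℝ) - (↑(m+m)) / 2) 0
        ≤ ∑ k ∈ Finset.range (m + m + 1), CB * PQ * ((↑(k - m) : ℝ) * r ^ (k - m)) :=
          Finset.sum_le_sum term_bound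
      _ = CB * PQ * ∑ k ∈ Finset.range (m + m + 1), ((↑(k - m) : ℝ) * r ^ (k - m)) := by
          rw [Finset.mul_sum]
      _ ≤ CB * PQ * S := by
          apply mul_le_mul_of_nonneg_left series_bound (by positivity)
  -- RHS computation
  have hsm : (0:ℝ) < Real.sqrt m := Real.sqrt_pos.2 (by linarith)
  have hCBle : CB ≤ 4^m / Real.sqrt m := by
    rw [le_div_iff₀ hsm]
    calc CB * Real.sqrt m ≤ CB * Real.sqrt (m + 1/2) := by
          apply mul_le_mul_of_nonneg_left (Real.sqrt_le_sqrt (by linarith)) hCB0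
      _ ≤ 4^m := cb_sqrt_le m
  have hRHS : Real.sqrt 2 * S / Real.sqrt (↑(m+m)) * (2 * Real.sqrt (p * q)) ^ (m+m)
      = S * (4^m / Real.sqrt m) * PQ := by
    have h1 : ((↑(m+m)):ℝ) = 2 * m := by push_cast; ring
    rw [h1, Real.sqrt_mul (by norm_num) (m:ℝ)]
    have h2 : (2 * Real.sqrt (p * q)) ^ (m+m) = 4^m * PQ := by
      rw [← two_mul, pow_mul, mul_pow, Real.sq_sqrt (by positivity : (0:ℝ) ≤ p * q)]
      rw [hPQdef, show ((2:ℝ)^2) = 4 by norm_num, ← mul_pow]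
    rw [h2]
    have hs2 : Real.sqrt 2 ≠ 0 := by positivity
    field_simp
  rw [hRHS]
  calc ∑ k ∈ Finset.range (m + m + 1),
      ((m+m).choose k : ℝ) * p ^ k * q ^ (m+m-k) * max ((k : ℝ) - (↑(m+m)) / 2) 0
      ≤ CB * PQ * S := main
    _ ≤ (4^m / Real.sqrt m) * PQ * S := by
        apply mul_le_mul_of_nonneg_right (mul_le_mul_of_nonneg_right hCBle hPQ0) hS0
    _ = S * (4^m / Real.sqrt m) * PQ := by ring
end
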